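/- The trigonal symmetry group G_t is not a subgroup of the cubic symmetry group G_c, but with Â = [[√2/2, √6/6, √3/3],[−√2/2, √6/6, √3/3],[0, −√6/3, √3/3]], the conjugate group Âᵀ G_c Â contains G_t as a proper subgroup. -/

import Mathlib

open Matrix Real

/-- Rotation about `e₁` by angle `θ`. -/
noncomputable def rotX (θ : ℝ) : Matrix (Fin 3) (Fin 3) ℝ :=
  !![1, 0, 0; 0, Real.cos θ, -Real.sin θ; 0, Real.sin θ, Real.cos θ]

/-- Rotation about `e₂` by angle `θ`. -/
noncomputable def rotY (θ : ℝ) : Matrix (Fin 3) (Fin 3) ℝ :=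
  !![Real.cos θ, 0, Real.sin θ; 0, 1, 0; -Real.sin θ, 0, Real.cos θ]

/-- Rotation about `e₃` by angle `θ`. -/
noncomputable def rotZ (θ : ℝ) : Matrix (Fin 3) (Fin 3) ℝ :=
  !![Real.cos θ, -Real.sin θ, 0; Real.sin θ, Real.cos θ, 0; 0, 0, 1]

/-- Reflection about the plane with unit normal `n`. -/
noncomputable def reflM (n : Fin 3 → ℝ) : Matrix (Fin 3) (Fin 3) ℝ :=
  1 - (2 : ℝ) • vecMulVec n n

/-- The trigonal symmetry group. -/
noncomputable def Gt : Set (Matrix (Fin 3) (Fin 3) ℝ) :=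
  {1, -1, rotZ (2*π/3), -rotZ (2*π/3), rotZ (-(2*π/3)), -rotZ (-(2*π/3)),
   reflM ![1, 0, 0], -reflM ![1, 0, 0],
   reflM ![Real.cos (π/3), Real.sin (π/3), 0], -reflM ![Real.cos (π/3), Real.sin (π/3), 0],
   reflM ![Real.cos (2*π/3), Real.sin (2*π/3), 0], -reflM ![Real.cos (2*π/3), Real.sin (2*π/3), 0]}

/-- The listed elements generating the cubic symmetry group (up to sign). -/
noncomputable def GcGens : Set (Matrix (Fin 3) (Fin 3) ℝ) :=
  {A | ∃ B ∈ [(1 : Matrix (Fin 3) (Fin 3) ℝ),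
      rotX (π/2), rotX (-(π/2)), rotY (π/2), rotY (-(π/2)), rotZ (π/2), rotZ (-(π/2)),
      reflM ![1, 0, 0], reflM ![0, 1, 0], reflM ![0, 0, 1],
      reflM ![1/Real.sqrt 2, 1/Real.sqrt 2, 0], reflM ![1/Real.sqrt 2, -(1/Real.sqrt 2), 0],
      reflM ![1/Real.sqrt 2, 0, 1/Real.sqrt 2], reflM ![1/Real.sqrt 2, 0, -(1/Real.sqrt 2)],
      reflM ![0, 1/Real.sqrt 2, 1/Real.sqrt 2], reflM ![0, 1/Real.sqrt 2, -(1/Real.sqrt 2)]],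
    A = B ∨ A = -B}

/-- The cubic symmetry group: the multiplicative closure of the listed elements. -/
noncomputable def Gc : Set (Matrix (Fin 3) (Fin 3) ℝ) := Submonoid.closure GcGens

/-- The matrix `Â`. -/
noncomputable def Ahat : Matrix (Fin 3) (Fin 3) ℝ :=
  !![Real.sqrt 2 / 2, Real.sqrt 6 / 6, Real.sqrt 3 / 3;
     -(Real.sqrt 2 / 2), Real.sqrt 6 / 6, Real.sqrt 3 / 3;
     0, -(Real.sqrt 6 / 3), Real.sqrt 3 / 3]

/-! `G_c` consists of integer matrices, whereas the rotation `R_{2π/3,e₃}` has the entry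
`cos (2π/3) = -1/2`, so `G_t ⊄ G_c`.

The orthogonal matrix `Â` sends `e₃` to the cube diagonal `(1,1,1)/√3`, so conjugation by
`Â` turns the 3-fold rotations about that diagonal (cyclic permutation matrices) into
`R_{±2π/3,e₃}`, and the reflections in the diagonal planes containing it (transposition
matrices) into the three mirror reflections of `G_t`. The inclusion is proper: every element
of `G_t` maps `e₃` to `±e₃`, but `Âᵀ R_{π/2,e₃} Â` has `(3,3)` entry
`⟪Âe₃, R_{π/2,e₃} Âe₃⟫ = 1/3`. -/

lemma Real.cos_two_pi_div_three : cos (2 * π / 3) = -(1 / 2) := by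
  rw [show 2 * π / 3 = π - π / 3 by ring, cos_pi_sub, cos_pi_div_three]

lemma Real.sin_two_pi_div_three : sin (2 * π / 3) = √3 / 2 := by
  rw [show 2 * π / 3 = π - π / 3 by ring, sin_pi_sub, sin_pi_div_three]

lemma Real.sqrt_six : √6 = √2 * √3 := by
  rw [← sqrt_mul (by norm_num)]; norm_num

section

variable {n R : Type*} [Fintype n] [DecidableEq n] [Ring R]

def Subring.matrixSubmonoid (S : Subring R) : Submonoid (Matrix n n R) where
  carrier := {A | ∀ i j, A i j ∈ S}
  one_mem' i j := by
    rw [one_apply]; split_ifs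
    exacts [S.one_mem, S.zero_mem]
  mul_mem' hA hB i j := S.sum_mem fun k _ => S.mul_mem (hA i k) (hB k j)

lemma transpose_mul_mul_eq_of_mul_eq {A B g : Matrix n n R} (hA : Aᵀ * A = 1)
    (h : B * A = A * g) : Aᵀ * B * A = g := by
  rw [Matrix.mul_assoc, h, ← Matrix.mul_assoc, hA, Matrix.one_mul]

end

lemma GcGens_subset_matrixSubmonoid (S : Subring ℝ) :
    GcGens ⊆ (S.matrixSubmonoid : Submonoid (Matrix (Fin 3) (Fin 3) ℝ)) := by
  rintro A ⟨B, hB, rfl | rfl⟩ i j <;>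
    simp only [List.mem_cons, List.not_mem_nil, or_false] at hB <;>
    rcases hB with rfl | rfl | rfl | rfl | rfl | rfl | rfl | rfl | rfl | rfl | rfl | rfl | rfl |
      rfl | rfl | rfl <;>
    fin_cases i <;> fin_cases j <;>
    simp [rotX, rotY, rotZ, reflM, one_apply, ← mul_inv] <;> norm_num

lemma Gc_subset_matrixSubmonoid (S : Subring ℝ) :
    Gc ⊆ (S.matrixSubmonoid : Submonoid (Matrix (Fin 3) (Fin 3) ℝ)) :=
  Submonoid.closure_le.mpr (GcGens_subset_matrixSubmonoid S)

lemma rotZ_two_pi_div_three_not_mem_Gc : rotZ (2 * π / 3) ∉ Gc := by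
  intro h
  obtain ⟨k, hk⟩ : ∃ k : ℤ, (k : ℝ) = 1 / 2 := by
    simpa [rotZ, cos_two_pi_div_three, Subring.mem_bot] using
      Gc_subset_matrixSubmonoid ⊥ h 0 0
  have h2k : ((2 * k : ℤ) : ℝ) = ((1 : ℤ) : ℝ) := by push_cast; linarith
  have := Int.cast_injective h2k
  omega

lemma neg_mem_Gc {B : Matrix (Fin 3) (Fin 3) ℝ} (hB : B ∈ Gc) : -B ∈ Gc := by
  have h : (-1 : Matrix (Fin 3) (Fin 3) ℝ) ∈ Submonoid.closure GcGens :=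
    Submonoid.subset_closure ⟨1, by simp, .inr rfl⟩
  simpa [Gc] using mul_mem h hB

lemma Ahat_transpose_mul_self : Ahatᵀ * Ahat = 1 := by
  ext i j
  fin_cases i <;> fin_cases j <;> simp [Ahat, mul_apply, Fin.sum_univ_three, sqrt_six] <;> grind

lemma mem_conj_Gc_of_mul_Ahat_eq {B g : Matrix (Fin 3) (Fin 3) ℝ} (hB : B ∈ Gc)
    (h : B * Ahat = Ahat * g) :
    g ∈ (fun g => Ahatᵀ * g * Ahat) '' Gc ∧ -g ∈ (fun g => Ahatᵀ * g * Ahat) '' Gc :=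
  ⟨⟨B, hB, transpose_mul_mul_eq_of_mul_eq Ahat_transpose_mul_self h⟩,
    ⟨-B, neg_mem_Gc hB, by simp [transpose_mul_mul_eq_of_mul_eq Ahat_transpose_mul_self h]⟩⟩

lemma rotX_mul_rotY_mul_Ahat : rotX (π / 2) * rotY (π / 2) * Ahat = Ahat * rotZ (2 * π / 3) := by
  ext i j
  fin_cases i <;> fin_cases j <;>
    simp [rotX, rotY, rotZ, Ahat, mul_apply, Fin.sum_univ_three, cos_two_pi_div_three,
      sin_two_pi_div_three, sqrt_six] <;> grind

lemma rotX_mul_rotZ_mul_Ahat :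
    rotX (-(π / 2)) * rotZ (-(π / 2)) * Ahat = Ahat * rotZ (-(2 * π / 3)) := by
  ext i j
  fin_cases i <;> fin_cases j <;>
    simp [rotX, rotZ, Ahat, mul_apply, Fin.sum_univ_three, cos_two_pi_div_three,
      sin_two_pi_div_three, sqrt_six] <;> grind

lemma reflM_xy_mul_Ahat :
    reflM ![1 / √2, -(1 / √2), 0] * Ahat = Ahat * reflM ![1, 0, 0] := by
  ext i j
  fin_cases i <;> fin_cases j <;>
    simp [reflM, Ahat, mul_apply, Fin.sum_univ_three, one_apply, sqrt_six] <;> grind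

lemma reflM_xz_mul_Ahat :
    reflM ![1 / √2, 0, -(1 / √2)] * Ahat = Ahat * reflM ![cos (π / 3), sin (π / 3), 0] := by
  ext i j
  fin_cases i <;> fin_cases j <;>
    simp [reflM, Ahat, mul_apply, Fin.sum_univ_three, one_apply, sqrt_six] <;> grind

lemma reflM_yz_mul_Ahat : reflM ![0, 1 / √2, -(1 / √2)] * Ahat =
    Ahat * reflM ![cos (2 * π / 3), sin (2 * π / 3), 0] := by
  ext i j
  fin_cases i <;> fin_cases j <;>
    simp [reflM, Ahat, mul_apply, Fin.sum_univ_three, one_apply, sqrt_six,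
      cos_two_pi_div_three, sin_two_pi_div_three] <;>
    grind

lemma Gt_subset_conj_Gc : Gt ⊆ (fun g => Ahatᵀ * g * Ahat) '' Gc := by
  have gen {B : Matrix (Fin 3) (Fin 3) ℝ} (h : B ∈ GcGens) : B ∈ Gc :=
    Submonoid.subset_closure h
  have h1 := mem_conj_Gc_of_mul_Ahat_eq (one_mem _) (by rw [Matrix.one_mul, Matrix.mul_one])
  have h2 := mem_conj_Gc_of_mul_Ahat_eq
    (mul_mem (gen ⟨_, by simp, .inl rfl⟩) (gen ⟨_, by simp, .inl rfl⟩))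
    rotX_mul_rotY_mul_Ahat
  have h3 := mem_conj_Gc_of_mul_Ahat_eq
    (mul_mem (gen ⟨_, by simp, .inl rfl⟩) (gen ⟨_, by simp, .inl rfl⟩))
    rotX_mul_rotZ_mul_Ahat
  have h4 := mem_conj_Gc_of_mul_Ahat_eq (gen ⟨_, by simp, .inl rfl⟩) reflM_xy_mul_Ahat
  have h5 := mem_conj_Gc_of_mul_Ahat_eq (gen ⟨_, by simp, .inl rfl⟩) reflM_xz_mul_Ahat
  have h6 := mem_conj_Gc_of_mul_Ahat_eq (gen ⟨_, by simp, .inl rfl⟩) reflM_yz_mul_Ahat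
  simp only [Gt, Set.insert_subset_iff, Set.singleton_subset_iff]
  exact ⟨h1.1, h1.2, h2.1, h2.2, h3.1, h3.2, h4.1, h4.2, h5.1, h5.2, h6.1, h6.2⟩

lemma apply_two_two_of_mem_Gt {g : Matrix (Fin 3) (Fin 3) ℝ} (hg : g ∈ Gt) :
    g 2 2 = 1 ∨ g 2 2 = -1 := by
  simp only [Gt, Set.mem_insert_iff, Set.mem_singleton_iff] at hg
  rcases hg with rfl | rfl | rfl | rfl | rfl | rfl | rfl | rfl | rfl | rfl | rfl | rfl <;>
    simp [rotZ, reflM]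

lemma conj_rotZ_pi_div_two_apply_two_two : (Ahatᵀ * rotZ (π / 2) * Ahat) 2 2 = 1 / 3 := by
  simp [rotZ, Ahat, mul_apply, Fin.sum_univ_three]
  grind

/-- `G_t` is not a subgroup of `G_c`, but it is a proper subgroup of the
    conjugate group `Âᵀ G_c Â`. -/
theorem stmt_13 :
    ¬ (Gt ⊆ Gc) ∧
    Gt ⊆ (fun g => Ahatᵀ * g * Ahat) '' Gc ∧
    Gt ≠ (fun g => Ahatᵀ * g * Ahat) '' Gc := by
  refine ⟨fun h => rotZ_two_pi_div_three_not_mem_Gc (h (by simp [Gt])), Gt_subset_conj_Gc,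
    fun h => ?_⟩
  have hmem : Ahatᵀ * rotZ (π / 2) * Ahat ∈ Gt :=
    h ▸ ⟨rotZ (π / 2), Submonoid.subset_closure ⟨_, by simp, .inl rfl⟩, rfl⟩
  rcases apply_two_two_of_mem_Gt hmem with h22 | h22 <;>
    rw [conj_rotZ_pi_div_two_apply_two_two] at h22 <;> norm_num at h22
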